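/- arXiv:2008.12411 — 4 statements merged into one kernel-verified Lean document; each statement's English description precedes it below -/
import Mathlib

section
/- With F a discrete distribution function on ℕ₀ and α ∈ (0,1], the identity ⌈u⌉_{α,F} = F_α(F^←(u)) holds for all u ∈ (0,1), where F^←(u) = inf{x ∈ ℝ : F(x) ≥ u} is the pseudo-inverse of F. -/
/-! The intervals `(F(n-1), F(n)]` are pairwise disjoint because `F` is monotone, so the series
defining `⌈u⌉_{α,F}` has at most one nonzero term; for `0 < u < 1` that term is the one at the
quantile `n = F^←(u)`, which exists because `F → 1`. -/

open MeasureTheory Set Filter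

/-- `F(n-1)` with the convention `F(-1) = 0`. -/
noncomputable def Fm (F : ℕ → ℝ) : ℕ → ℝ := fun n => if n = 0 then 0 else F (n - 1)

/-- `F_α(n) = (1-α) F(n-1) + α F(n)`. -/
noncomputable def Falpha (α : ℝ) (F : ℕ → ℝ) (n : ℕ) : ℝ :=
  (1 - α) * Fm F n + α * F n

/-- `⌈u⌉_{α,F} = Σ_{n ≥ 0} F_α(n) · 1_{(F(n-1), F(n)]}(u)`, with `⌈0⌉ = 0` automatic. -/
noncomputable def ceilT (α : ℝ) (F : ℕ → ℝ) (u : ℝ) : ℝ :=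
  ∑' n : ℕ, Falpha α F n * Set.indicator (Set.Ioc (Fm F n) (F n)) (fun _ => (1 : ℝ)) u

lemma le_Fm_of_lt {F : ℕ → ℝ} (hF : Monotone F) {m n : ℕ} (h : m < n) : F m ≤ Fm F n := by
  rw [Fm, if_neg (by omega)]
  exact hF (by omega)

lemma eq_of_mem_Ioc_Fm {F : ℕ → ℝ} (hF : Monotone F) {u : ℝ} {m n : ℕ}
    (hm : u ∈ Ioc (Fm F m) (F m)) (hn : u ∈ Ioc (Fm F n) (F n)) : m = n := by
  rcases lt_trichotomy m n with hmn | hmn | hmn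
  · linarith [le_Fm_of_lt hF hmn, hm.2, hn.1]
  · exact hmn
  · linarith [le_Fm_of_lt hF hmn, hn.2, hm.1]

lemma ceilT_eq_of_mem_Ioc {F : ℕ → ℝ} (hF : Monotone F) (α : ℝ) {u : ℝ} {N : ℕ}
    (hN : u ∈ Ioc (Fm F N) (F N)) : ceilT α F u = Falpha α F N := by
  rw [ceilT, tsum_eq_single N, indicator_of_mem hN, mul_one]
  intro n hn
  rw [indicator_of_notMem fun h => hn (eq_of_mem_Ioc_Fm hF h hN), mul_zero]

lemma mem_Ioc_Fm_sInf {F : ℕ → ℝ} {u : ℝ} (hu : 0 < u) (hne : {n : ℕ | u ≤ F n}.Nonempty) :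
    u ∈ Ioc (Fm F (sInf {n : ℕ | u ≤ F n})) (F (sInf {n : ℕ | u ≤ F n})) := by
  refine ⟨?_, Nat.sInf_mem hne⟩
  set N := sInf {n : ℕ | u ≤ F n}
  by_cases hN : N = 0
  · simpa [Fm, hN] using hu
  · rw [Fm, if_neg hN]
    exact lt_of_not_ge (Nat.notMem_of_lt_sInf (show N - 1 < N by omega))

theorem stmt1_general (F : ℕ → ℝ) (hmono : Monotone F)
    (hlim : Tendsto F atTop (nhds 1)) (α : ℝ) :
    ∀ u ∈ Set.Ioo (0 : ℝ) 1, ceilT α F u = Falpha α F (sInf {n : ℕ | u ≤ F n}) := by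
  rintro u ⟨hu0, hu1⟩
  have hne : {n : ℕ | u ≤ F n}.Nonempty := (hlim.eventually (eventually_ge_nhds hu1)).exists
  exact ceilT_eq_of_mem_Ioc hmono α (mem_Ioc_Fm_sInf hu0 hne)

/-- `⌈u⌉_{α,F} = F_α(F^←(u))` for all `u ∈ (0,1)`, where
`F^←(u) = inf {n : F(n) ≥ u}` is the pseudo-inverse (quantile function) of the
discrete distribution function `F` on `ℕ₀`. -/
theorem stmt1 (F : ℕ → ℝ) (hmono : Monotone F) (hF0 : ∀ n, 0 ≤ F n) (hF1 : ∀ n, F n ≤ 1)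
    (hlim : Tendsto F atTop (nhds 1)) (α : ℝ) (hα : α ∈ Set.Ioc (0 : ℝ) 1) :
    ∀ u ∈ Set.Ioo (0 : ℝ) 1, ceilT α F u = Falpha α F (sInf {n : ℕ | u ≤ F n}) :=
  stmt1_general F hmono hlim α
end

section
/- Let C be an absolutely continuous (d+1)-dimensional copula with density c, F a discrete distribution function on ℕ₀, and α ∈ (0,1]. Define 𝔠_{α,F,C}(u,v) = c(⌈u⌉_{α,F}, v) for (u,v) ∈ [0,1] × [0,1]^d. Then 𝔠_{α,F,C} is nonnegative, measurable, and integrates to 1 over [0,1]^{d+1}, i.e., it is a probability density with respect to (d+1)-dimensional Lebesgue measure on the unit cube. -/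
open MeasureTheory Set Filter

/-! Every value `⌈u⌉_{α,F}` is either `0` or a convex combination `F_α(n)` of `F(n-1)` and `F(n)`,
so it lies in `[0,1]`, and the section `v ↦ c(⌈u⌉, v)` has integral `1` over `[0,1]^d` for every `u`.
Tonelli then gives total mass `vol [0,1] = 1`. Measurability holds because `u ↦ ⌈u⌉` is constant
on each of the pairwise disjoint intervals `(F(n-1), F(n)]` and zero off their union. -/

open scoped Function

section DisjointIndicatorSum

variable {X : Type*} {s : ℕ → Set X} (a : ℕ → ℝ)

lemma hasSum_mul_indicator_one_of_mem (hs : Pairwise (Disjoint on s)) {x : X} {n : ℕ}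
    (hx : x ∈ s n) : HasSum (fun m => a m * (s m).indicator (fun _ => (1 : ℝ)) x) (a n) := by
  convert hasSum_single n fun m hm => ?_ using 1
  · simp [hx]
  · simp [(hs hm).notMem_of_mem_right hx]

lemma tsum_mul_indicator_one_of_forall_notMem {x : X} (hx : ∀ n, x ∉ s n) :
    ∑' m, a m * (s m).indicator (fun _ => (1 : ℝ)) x = 0 := by
  simp [hx]

lemma summable_mul_indicator_one (hs : Pairwise (Disjoint on s)) (x : X) :
    Summable fun m => a m * (s m).indicator (fun _ => (1 : ℝ)) x := by
  by_cases hx : ∃ n, x ∈ s n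
  · obtain ⟨n, hn⟩ := hx
    exact (hasSum_mul_indicator_one_of_mem a hs hn).summable
  · push Not at hx
    simp [hx]

lemma tsum_mul_indicator_one_mem {S : Set ℝ} (hs : Pairwise (Disjoint on s)) (ha : ∀ n, a n ∈ S)
    (h0 : (0 : ℝ) ∈ S) (x : X) : ∑' m, a m * (s m).indicator (fun _ => (1 : ℝ)) x ∈ S := by
  by_cases hx : ∃ n, x ∈ s n
  · obtain ⟨n, hn⟩ := hx
    rw [(hasSum_mul_indicator_one_of_mem a hs hn).tsum_eq]
    exact ha n
  · push Not at hx
    rwa [tsum_mul_indicator_one_of_forall_notMem a hx]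

lemma measurable_tsum_mul_indicator_one [MeasurableSpace X] (hs : Pairwise (Disjoint on s))
    (hmeas : ∀ n, MeasurableSet (s n)) :
    Measurable fun x => ∑' m, a m * (s m).indicator (fun _ => (1 : ℝ)) x :=
  measurable_of_tendsto_metrizable
    (fun _ => Finset.measurable_sum _ fun n _ => (measurable_const.indicator (hmeas n)).const_mul _)
    (tendsto_pi_nhds.2 fun x => (summable_mul_indicator_one a hs x).hasSum.tendsto_sum_nat)

end DisjointIndicatorSum

section Ceil

variable {F : ℕ → ℝ}

lemma Fm_succ (n : ℕ) : Fm F (n + 1) = F n := by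
  simp [Fm]

lemma monotone_Fm (hmono : Monotone F) (hF0 : 0 ≤ F 0) : Monotone (Fm F) := by
  refine monotone_nat_of_le_succ fun n => ?_
  rw [Fm_succ]
  cases n with
  | zero => simpa [Fm] using hF0
  | succ n => simpa [Fm_succ] using hmono n.le_succ

lemma pairwise_disjoint_Ioc_Fm (hmono : Monotone F) (hF0 : 0 ≤ F 0) :
    Pairwise (Disjoint on fun n => Ioc (Fm F n) (F n)) := by
  simpa [Fm_succ] using (monotone_Fm hmono hF0).pairwise_disjoint_on_Ioc_succ

lemma Fm_mem_Icc (hF : ∀ n, F n ∈ Icc (0 : ℝ) 1) (n : ℕ) : Fm F n ∈ Icc (0 : ℝ) 1 := by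
  unfold Fm
  split_ifs
  · exact left_mem_Icc.2 zero_le_one
  · exact hF _

lemma Falpha_mem_Icc {α : ℝ} (hα : α ∈ Icc (0 : ℝ) 1) (hF : ∀ n, F n ∈ Icc (0 : ℝ) 1) (n : ℕ) :
    Falpha α F n ∈ Icc (0 : ℝ) 1 :=
  convex_Icc 0 1 (Fm_mem_Icc hF n) (hF n) (sub_nonneg.2 hα.2) hα.1 (sub_add_cancel 1 α)

lemma ceilT_mem_Icc (hmono : Monotone F) {α : ℝ} (hα : α ∈ Icc (0 : ℝ) 1)
    (hF : ∀ n, F n ∈ Icc (0 : ℝ) 1) (u : ℝ) : ceilT α F u ∈ Icc (0 : ℝ) 1 :=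
  tsum_mul_indicator_one_mem _ (pairwise_disjoint_Ioc_Fm hmono (hF 0).1) (Falpha_mem_Icc hα hF)
    (left_mem_Icc.2 zero_le_one) u

lemma measurable_ceilT (hmono : Monotone F) (hF0 : 0 ≤ F 0) (α : ℝ) : Measurable (ceilT α F) :=
  measurable_tsum_mul_indicator_one _ (pairwise_disjoint_Ioc_Fm hmono hF0) fun _ => measurableSet_Ioc

end Ceil

lemma lintegral_ofReal_eq_one_of_integral_eq_one {X : Type*} [MeasurableSpace X] {μ : Measure X}
    {f : X → ℝ} (hf : 0 ≤ f) (h : ∫ x, f x ∂μ = 1) : ∫⁻ x, ENNReal.ofReal (f x) ∂μ = 1 := by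
  rw [← ofReal_integral_eq_lintegral_ofReal (Integrable.of_integral_ne_zero (by simp [h]))
    (Eventually.of_forall hf), h, ENNReal.ofReal_one]

lemma setIntegral_prod_eq_measureReal_of_setIntegral_eq_one {X Y : Type*} [MeasurableSpace X]
    [MeasurableSpace Y] {μ : Measure X} {ν : Measure Y} [SFinite μ] [SFinite ν]
    {h : X × Y → ℝ} (hmeas : Measurable h) (hnonneg : 0 ≤ h) (U : Set X) {T : Set Y}
    (hsec : ∀ x, ∫ y in T, h (x, y) ∂ν = 1) :
    ∫ p in U ×ˢ T, h p ∂μ.prod ν = μ.real U := by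
  have hlint : ∫⁻ p in U ×ˢ T, ENNReal.ofReal (h p) ∂μ.prod ν = μ U := by
    rw [← Measure.prod_restrict, lintegral_prod _ hmeas.ennreal_ofReal.aemeasurable]
    simp [lintegral_ofReal_eq_one_of_integral_eq_one (fun y => hnonneg (_, y)) (hsec _)]
  rw [integral_eq_lintegral_of_nonneg_ae (Eventually.of_forall hnonneg)
    hmeas.aestronglyMeasurable, hlint, measureReal_def]

theorem stmt2_general (d : ℕ) (F : ℕ → ℝ) (hmono : Monotone F) (hF0 : ∀ n, 0 ≤ F n)
    (hF1 : ∀ n, F n ≤ 1)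
    (α : ℝ) (hα : α ∈ Set.Ioc (0 : ℝ) 1)
    (c : ℝ → (Fin d → ℝ) → ℝ)
    (hc_meas : Measurable (Function.uncurry c))
    (hc_nonneg : ∀ u v, 0 ≤ c u v)
    (hc_sec : ∀ u ∈ Set.Icc (0 : ℝ) 1, ∫ v in Set.Icc (0 : Fin d → ℝ) 1, c u v = 1) :
    (∀ (u : ℝ) (v : Fin d → ℝ), 0 ≤ c (ceilT α F u) v) ∧
    Measurable (fun p : ℝ × (Fin d → ℝ) => c (ceilT α F p.1) p.2) ∧
    ∫ p in (Set.Icc (0 : ℝ) 1) ×ˢ (Set.Icc (0 : Fin d → ℝ) 1),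
        c (ceilT α F p.1) p.2 = 1 := by
  have hmeas : Measurable fun p : ℝ × (Fin d → ℝ) => c (ceilT α F p.1) p.2 :=
    hc_meas.comp (((measurable_ceilT hmono (hF0 0) α).comp measurable_fst).prodMk measurable_snd)
  have hceil : ∀ u, ceilT α F u ∈ Icc (0 : ℝ) 1 :=
    ceilT_mem_Icc hmono (Ioc_subset_Icc_self hα) fun n => ⟨hF0 n, hF1 n⟩
  refine ⟨fun u v => hc_nonneg _ _, hmeas, ?_⟩
  rw [Measure.volume_eq_prod, setIntegral_prod_eq_measureReal_of_setIntegral_eq_one hmeas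
    (fun p => hc_nonneg _ _) _ fun u => hc_sec _ (hceil u)]
  simp [measureReal_def, Real.volume_Icc]

/-- the transformed map `𝔠_{α,F,C}(u,v) = c(⌈u⌉_{α,F}, v)` is nonnegative,
measurable, and integrates to `1` over the unit cube `[0,1]^{d+1}`, i.e. it is a
probability density w.r.t. Lebesgue measure on the cube.  Here `c` is the density of an
absolutely continuous `(d+1)`-dimensional copula, encoded by: `c` is nonnegative,
measurable, and each section `c(u, ·)` integrates to `1` over `[0,1]^d`
(the fact `∂₁C(u, 1, …, 1) = 1`). -/
theorem stmt2 (d : ℕ) (F : ℕ → ℝ) (hmono : Monotone F) (hF0 : ∀ n, 0 ≤ F n)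
    (hF1 : ∀ n, F n ≤ 1) (hlim : Tendsto F atTop (nhds 1))
    (α : ℝ) (hα : α ∈ Set.Ioc (0 : ℝ) 1)
    (c : ℝ → (Fin d → ℝ) → ℝ)
    (hc_meas : Measurable (Function.uncurry c))
    (hc_nonneg : ∀ u v, 0 ≤ c u v)
    (hc_sec : ∀ u ∈ Set.Icc (0 : ℝ) 1, ∫ v in Set.Icc (0 : Fin d → ℝ) 1, c u v = 1) :
    (∀ (u : ℝ) (v : Fin d → ℝ), 0 ≤ c (ceilT α F u) v) ∧
    Measurable (fun p : ℝ × (Fin d → ℝ) => c (ceilT α F p.1) p.2) ∧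
    ∫ p in (Set.Icc (0 : ℝ) 1) ×ˢ (Set.Icc (0 : Fin d → ℝ) 1),
        c (ceilT α F p.1) p.2 = 1 :=
  stmt2_general d F hmono hF0 hF1 α hα c hc_meas hc_nonneg hc_sec
end

section
/- Let d ≥ 1, θ ∈ [−1,1] \ {0}, C(u,v) = u·v₁···v_d + θ·u(1−u)·v₁(1−v₁)·Π_{i=2}^d v_i, and F(x) = (1/3)·1_{[1,2)}(x) + (2/3)·1_{[2,3)}(x) + 1_{[3,∞)}(x). For α ∈ (0,1] with α ≠ 1/2 and any v₁ ∈ (0,1), ∫_{[0,1]×[0,v₁]×[0,1]^{d-1}} 𝔠_{α,F,C}(s,t) dλ^{d+1}(s,t) = v₁ + θ·v₁(1−v₁)·(1−2α)/3 ≠ v₁. Consequently 𝔠_{α,F,C} fails to be a copula density. -/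
/-!
The density factorises as `1 + θ f(u) g(v)` with `f = 1 - 2⌈·⌉_{α,F}` and `g(v) = 1 - 2 v₁`,
so by Fubini the integral over `[0,1] × [0,v₁] × [0,1]^{d-1}` is `v₁ + θ (∫₀¹ f) (∫₀^{v₁} g)`.
Here `∫₀^{v₁} g = v₁(1 - v₁)`, while `⌈·⌉_{α,F}` is the step function with values
`α/3, (1+α)/3, (2+α)/3` on the thirds of `(0,1]`, so `∫₀¹ ⌈u⌉ du = (1+α)/3` and
`∫₀¹ f = (1 - 2α)/3`, which vanishes only for `α = 1/2`.
-/

open MeasureTheory Set Filter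

/-- The three-point distribution function on `ℕ₀` with jumps `1/3` at `1`, `2`, `3`:
`F(0)=0, F(1)=1/3, F(2)=2/3, F(n)=1` for `n ≥ 3`. -/
noncomputable def Fex : ℕ → ℝ := fun n => min 1 ((n : ℝ) / 3)

lemma Fex_of_three_le {n : ℕ} (hn : 3 ≤ n) : Fex n = 1 :=
  min_eq_left ((one_le_div₀ (by norm_num)).2 (by exact_mod_cast hn))

lemma ceilT_Fex (α u : ℝ) : ceilT α Fex u =
    (Ioc 0 (1 / 3)).indicator (fun _ => α / 3) u
      + (Ioc (1 / 3) (2 / 3)).indicator (fun _ => (1 + α) / 3) u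
      + (Ioc (2 / 3) 1).indicator (fun _ => (2 + α) / 3) u := by
  have hvanish : ∀ n ∉ Finset.range 4,
      Falpha α Fex n * (Ioc (Fm Fex n) (Fex n)).indicator (fun _ => (1 : ℝ)) u = 0 := by
    intro n hn
    rw [Finset.mem_range, not_lt] at hn
    have hFm : Fm Fex n = 1 := by rw [Fm, if_neg (by omega), Fex_of_three_le (by omega)]
    simp [hFm, Fex_of_three_le (by omega : 3 ≤ n)]
  rw [ceilT, tsum_eq_sum hvanish]
  simp only [Finset.sum_range_succ, Finset.sum_range_zero, Falpha, Fm, Fex]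
  norm_num [← indicator_const_mul]
  ring_nf

lemma setIntegral_indicator_Ioc_const {s : Set ℝ} {a b : ℝ} (hab : a ≤ b) (hs : Ioc a b ⊆ s)
    (c : ℝ) : ∫ u in s, (Ioc a b).indicator (fun _ => c) u = (b - a) * c := by
  rw [setIntegral_indicator measurableSet_Ioc, inter_eq_right.2 hs, setIntegral_const,
    Real.volume_real_Ioc_of_le hab, smul_eq_mul]

lemma integrable_indicator_Ioc_const (a b c : ℝ) :
    Integrable ((Ioc a b).indicator (fun _ => c)) :=
  (integrableOn_const (by simp)).integrable_indicator measurableSet_Ioc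

lemma integrable_ceilT_Fex (α : ℝ) : Integrable (ceilT α Fex) := by
  simp only [funext (ceilT_Fex α)]
  exact ((integrable_indicator_Ioc_const _ _ _).fun_add
    (integrable_indicator_Ioc_const _ _ _)).fun_add (integrable_indicator_Ioc_const _ _ _)

lemma setIntegral_Icc_ceilT_Fex (α : ℝ) : ∫ u in Icc 0 1, ceilT α Fex u = (1 + α) / 3 := by
  have hsub : ∀ {a b : ℝ}, 0 ≤ a → b ≤ 1 → Ioc a b ⊆ Icc 0 1 :=
    fun ha hb => Ioc_subset_Icc_self.trans (Icc_subset_Icc ha hb)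
  simp only [ceilT_Fex]
  rw [integral_add ((integrable_indicator_Ioc_const _ _ _).fun_add
      (integrable_indicator_Ioc_const _ _ _)).integrableOn
      (integrable_indicator_Ioc_const _ _ _).integrableOn,
    integral_add (integrable_indicator_Ioc_const _ _ _).integrableOn
      (integrable_indicator_Ioc_const _ _ _).integrableOn,
    setIntegral_indicator_Ioc_const (by norm_num) (hsub le_rfl (by norm_num)),
    setIntegral_indicator_Ioc_const (by norm_num) (hsub (by norm_num) (by norm_num)),
    setIntegral_indicator_Ioc_const (by norm_num) (hsub (by norm_num) le_rfl)]
  ring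

lemma setIntegral_Icc_one_sub_two_mul_ceilT_Fex (α : ℝ) :
    ∫ u in Icc 0 1, (1 - 2 * ceilT α Fex u) = (1 - 2 * α) / 3 := by
  rw [integral_sub (integrable_const 1) ((integrable_ceilT_Fex α).integrableOn.const_mul 2),
    integral_const_mul, setIntegral_Icc_ceilT_Fex, integral_const, smul_eq_mul,
    measureReal_restrict_apply_univ, Real.volume_real_Icc_of_le zero_le_one]
  ring

lemma setIntegral_pi_comp_eval {ι : Type*} [Fintype ι] [DecidableEq ι] (s : ι → Set ℝ) (j : ι)
    (f : ℝ → ℝ) :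
    ∫ v in univ.pi s, f (v j) =
      (∫ t in s j, f t) * ∏ i ∈ Finset.univ.erase j, volume.real (s i) := by
  have hprod : ∀ v : ι → ℝ, f (v j) = ∏ i, Function.update (fun _ _ => 1) j f i (v i) := by
    intro v
    rw [Fintype.prod_eq_single j (fun i hi => by simp [hi])]
    simp
  simp_rw [hprod, volume_pi, Measure.restrict_pi_pi, integral_fintype_prod_eq_prod,
    ← Finset.mul_prod_erase _ _ (Finset.mem_univ j), Function.update_self]
  refine congrArg _ (Finset.prod_congr rfl fun i hi => ?_)
  simp [Function.update_of_ne (Finset.ne_of_mem_erase hi)]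

lemma setIntegral_Icc_update_comp_eval {ι : Type*} [Fintype ι] [DecidableEq ι] (j : ι) (x : ℝ)
    (f : ℝ → ℝ) :
    ∫ v in Icc (0 : ι → ℝ) (Function.update (fun _ => 1) j x), f (v j) =
      ∫ t in Icc 0 x, f t := by
  rw [← pi_univ_Icc, setIntegral_pi_comp_eval, Function.update_self,
    Finset.prod_eq_one, mul_one, Pi.zero_apply]
  intro i hi
  simp [Function.update_of_ne (Finset.ne_of_mem_erase hi)]

lemma setIntegral_Icc_one_sub_two_mul {x : ℝ} (hx : 0 ≤ x) :
    ∫ t in Icc 0 x, (1 - 2 * t) = x * (1 - x) := by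
  rw [integral_Icc_eq_integral_Ioc, ← intervalIntegral.integral_of_le hx,
    intervalIntegral.integral_sub intervalIntegrable_const
      (intervalIntegral.intervalIntegrable_id.const_mul 2),
    intervalIntegral.integral_const_mul, integral_id, intervalIntegral.integral_const]
  simp
  ring

lemma setIntegral_prod_one_add_mul {α β : Type*} [MeasurableSpace α] [MeasurableSpace β]
    {μ : Measure α} {ν : Measure β} [SFinite μ] [SFinite ν] {s : Set α} {t : Set β}
    (hs : μ s ≠ ⊤) (ht : ν t ≠ ⊤) {f : α → ℝ} {g : β → ℝ} (hf : IntegrableOn f s μ)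
    (hg : IntegrableOn g t ν) (c : ℝ) :
    ∫ p in s ×ˢ t, (1 + c * f p.1 * g p.2) ∂μ.prod ν =
      μ.real s * ν.real t + c * (∫ x in s, f x ∂μ) * ∫ y in t, g y ∂ν := by
  have hst : (μ.prod ν) (s ×ˢ t) ≠ ⊤ := by
    rw [Measure.prod_prod]; exact ENNReal.mul_ne_top hs ht
  have hfg : IntegrableOn (fun p : α × β => c * f p.1 * g p.2) (s ×ˢ t) (μ.prod ν) := by
    rw [IntegrableOn, ← Measure.prod_restrict]
    exact (hf.const_mul c).mul_prod hg
  have h1 : IntegrableOn (fun _ => (1 : ℝ)) (s ×ˢ t) (μ.prod ν) := integrableOn_const hst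
  rw [integral_add h1 hfg, setIntegral_const, smul_eq_mul, mul_one, measureReal_prod_prod,
    setIntegral_prod_mul (fun x => c * f x) g, integral_const_mul]

theorem stmt8_general (d : ℕ) [NeZero d] (θ α : ℝ) (hθ0 : θ ≠ 0) (hα2 : α ≠ 1 / 2) :
    ∀ v₁ ∈ Set.Ioo (0 : ℝ) 1,
      (∫ p in (Set.Icc (0 : ℝ) 1) ×ˢ
            (Set.Icc (0 : Fin d → ℝ) (Function.update (fun _ => (1 : ℝ)) 0 v₁)),
          (1 + θ * (1 - 2 * ceilT α Fex p.1) * (1 - 2 * p.2 0)) =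
        v₁ + θ * v₁ * (1 - v₁) * ((1 - 2 * α) / 3)) ∧
      v₁ + θ * v₁ * (1 - v₁) * ((1 - 2 * α) / 3) ≠ v₁ := by
  rintro v₁ ⟨hv₁_pos, hv₁_lt⟩
  set B := Icc (0 : Fin d → ℝ) (Function.update (fun _ => 1) 0 v₁)
  have hB (f : ℝ → ℝ) : ∫ v in B, f (v 0) = ∫ t in Icc 0 v₁, f t :=
    setIntegral_Icc_update_comp_eval 0 v₁ f
  have hvolB : volume.real B = v₁ := by
    simpa [hv₁_pos.le] using hB fun _ => 1
  refine ⟨?_, ?_⟩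
  · have hf : IntegrableOn (fun u => 1 - 2 * ceilT α Fex u) (Icc 0 1) :=
      (integrable_const 1).sub ((integrable_ceilT_Fex α).integrableOn.const_mul 2)
    have hg : IntegrableOn (fun v : Fin d → ℝ => 1 - 2 * v 0) B :=
      (continuous_const.sub (continuous_const.mul (continuous_apply 0))).integrableOn_Icc
    rw [Measure.volume_eq_prod,
      setIntegral_prod_one_add_mul (by simp) isCompact_Icc.measure_ne_top hf hg,
      setIntegral_Icc_one_sub_two_mul_ceilT_Fex, hB (fun t => 1 - 2 * t),
      setIntegral_Icc_one_sub_two_mul hv₁_pos.le, hvolB, Real.volume_real_Icc_of_le zero_le_one]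
    ring
  · have h2α : 1 - 2 * α ≠ 0 := fun h => hα2 (by linarith)
    have h1v : 1 - v₁ ≠ 0 := by linarith
    simp [hθ0, hv₁_pos.ne', h1v, h2α]

/-- for the FGM-type copula with density `c(u,v) = 1 + θ(1−2u)(1−2v₁)`
(`θ ≠ 0`) and the three-point distribution `Fex`, for `α ≠ 1/2` and any `v₁ ∈ (0,1)`,
`∫_{[0,1]×[0,v₁]×[0,1]^{d−1}} 𝔠_{α,F,C} = v₁ + θ v₁(1−v₁)(1−2α)/3 ≠ v₁`;
consequently `𝔠_{α,F,C}` fails to be a copula density. -/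
theorem stmt8 (d : ℕ) [NeZero d] (θ α : ℝ) (hθ : θ ∈ Set.Icc (-1 : ℝ) 1) (hθ0 : θ ≠ 0)
    (hα : α ∈ Set.Ioc (0 : ℝ) 1) (hα2 : α ≠ 1 / 2) :
    ∀ v₁ ∈ Set.Ioo (0 : ℝ) 1,
      (∫ p in (Set.Icc (0 : ℝ) 1) ×ˢ
            (Set.Icc (0 : Fin d → ℝ) (Function.update (fun _ => (1 : ℝ)) 0 v₁)),
          (1 + θ * (1 - 2 * ceilT α Fex p.1) * (1 - 2 * p.2 0)) =
        v₁ + θ * v₁ * (1 - v₁) * ((1 - 2 * α) / 3)) ∧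
      v₁ + θ * v₁ * (1 - v₁) * ((1 - 2 * α) / 3) ≠ v₁ :=
  stmt8_general d θ α hθ0 hα2
end

section
/- Let ρ₁, ρ₂ ∈ (−1,1) with ρ₁² < ρ₂. Then for every k ∈ ℕ the (k+1)×(k+1) matrix Σ with first row/column (1, ρ₁,…,ρ₁) and lower-right k×k block the exchangeable correlation matrix (1 on the diagonal, ρ₂ off-diagonal) is positive definite. -/
/-!
Split a vector as `x = (x₀, y)` with `s = ∑ yᵢ` and `t = ∑ yᵢ²`. The quadratic form of the matrix
completes to `(x₀ + ρ₁ s)² + (ρ₂ - ρ₁²) s² + (1 - ρ₂) t`, a sum of nonnegative terms since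
`ρ₁² < ρ₂ < 1`. If it vanishes then `t = 0`, so `y = 0`, and then the first square is `x₀²`.
-/

open Matrix

namespace BorderedExchangeable

variable (ρ₁ ρ₂ : ℝ) {k : ℕ}

def matrix (k : ℕ) : Matrix (Fin (k + 1)) (Fin (k + 1)) ℝ :=
  Matrix.of fun i j => if i = j then 1 else if i = 0 ∨ j = 0 then ρ₁ else ρ₂

theorem isHermitian : (matrix ρ₁ ρ₂ k).IsHermitian := by
  ext i j
  simp only [matrix, conjTranspose_apply, of_apply, star_trivial]
  split_ifs <;> simp_all

theorem mulVec_zero_apply (x : Fin (k + 1) → ℝ) :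
    (matrix ρ₁ ρ₂ k *ᵥ x) 0 = x 0 + ρ₁ * ∑ i : Fin k, x i.succ := by
  simp [matrix, mulVec, dotProduct, Fin.sum_univ_succ, Finset.mul_sum, eq_comm (a := (0 : Fin _))]

theorem mulVec_succ_apply (x : Fin (k + 1) → ℝ) (i : Fin k) :
    (matrix ρ₁ ρ₂ k *ᵥ x) i.succ =
      ρ₁ * x 0 + ρ₂ * ∑ j : Fin k, x j.succ + (1 - ρ₂) * x i.succ := by
  have hrow : ∀ j : Fin k, (if i = j then 1 else ρ₂) * x j.succ =
      ρ₂ * x j.succ + if i = j then (1 - ρ₂) * x i.succ else 0 := by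
    intro j
    split_ifs with h
    · subst h; ring
    · ring
  simp only [matrix, mulVec, dotProduct, of_apply, Fin.sum_univ_succ, Fin.succ_ne_zero,
    Fin.succ_inj, if_false, false_or, if_true, hrow, Finset.sum_add_distrib,
    Finset.sum_ite_eq, Finset.mem_univ, ← Finset.mul_sum]
  ring

theorem dotProduct_mulVec (x : Fin (k + 1) → ℝ) :
    x ⬝ᵥ matrix ρ₁ ρ₂ k *ᵥ x =
      (x 0 + ρ₁ * ∑ i : Fin k, x i.succ) ^ 2 + (ρ₂ - ρ₁ ^ 2) * (∑ i : Fin k, x i.succ) ^ 2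
        + (1 - ρ₂) * ∑ i : Fin k, x i.succ ^ 2 := by
  have hsucc : ∑ i : Fin k, x i.succ * (matrix ρ₁ ρ₂ k *ᵥ x) i.succ =
      (ρ₁ * x 0 + ρ₂ * ∑ i : Fin k, x i.succ) * ∑ i : Fin k, x i.succ
        + (1 - ρ₂) * ∑ i : Fin k, x i.succ ^ 2 := by
    simp only [mulVec_succ_apply, Finset.mul_sum, ← Finset.sum_add_distrib]
    exact Finset.sum_congr rfl fun i _ => by ring
  rw [dotProduct, Fin.sum_univ_succ, hsucc, mulVec_zero_apply]
  ring

theorem posDef (h₂ : ρ₂ < 1) (h : ρ₁ ^ 2 < ρ₂) : (matrix ρ₁ ρ₂ k).PosDef := by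
  refine (posDef_iff_dotProduct_mulVec).2 ⟨isHermitian ρ₁ ρ₂, fun x hx => ?_⟩
  rw [star_trivial, dotProduct_mulVec]
  by_cases htail : ∀ i : Fin k, x i.succ = 0
  · have hx0 : x 0 ≠ 0 := fun h0 => hx (funext fun i => Fin.cases h0 htail i)
    simp only [htail, Finset.sum_const_zero, mul_zero, add_zero, zero_pow two_ne_zero]
    positivity
  · push Not at htail
    obtain ⟨i, hi⟩ := htail
    have ht : 0 < ∑ i : Fin k, x i.succ ^ 2 :=
      (sq_pos_of_ne_zero hi).trans_le
        (Finset.single_le_sum (fun j _ => sq_nonneg (x j.succ)) (Finset.mem_univ i))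
    linarith [sq_nonneg (x 0 + ρ₁ * ∑ i : Fin k, x i.succ),
      mul_nonneg (sub_nonneg.2 h.le) (sq_nonneg (∑ i : Fin k, x i.succ)),
      mul_pos (sub_pos.2 h₂) ht]

end BorderedExchangeable

theorem stmt17_general (ρ₁ ρ₂ : ℝ) (h₂ : ρ₂ ∈ Set.Ioo (-1 : ℝ) 1)
    (h : ρ₁ ^ 2 < ρ₂) :
    ∀ k : ℕ, Matrix.PosDef (Matrix.of fun i j : Fin (k + 1) =>
      if i = j then (1 : ℝ) else if i = 0 ∨ j = 0 then ρ₁ else ρ₂) :=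
  fun _ => BorderedExchangeable.posDef ρ₁ ρ₂ h₂.2 h

/-- let `ρ₁, ρ₂ ∈ (−1,1)` with `ρ₁² < ρ₂`.  Then for every `k ∈ ℕ` the
`(k+1)×(k+1)` matrix with first row/column `(1, ρ₁, …, ρ₁)` and exchangeable lower-right
block (diagonal `1`, off-diagonal `ρ₂`) is positive definite. -/
theorem stmt17 (ρ₁ ρ₂ : ℝ) (h₁ : ρ₁ ∈ Set.Ioo (-1 : ℝ) 1) (h₂ : ρ₂ ∈ Set.Ioo (-1 : ℝ) 1)
    (h : ρ₁ ^ 2 < ρ₂) :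
    ∀ k : ℕ, Matrix.PosDef (Matrix.of fun i j : Fin (k + 1) =>
      if i = j then (1 : ℝ) else if i = 0 ∨ j = 0 then ρ₁ else ρ₂) :=
  stmt17_general ρ₁ ρ₂ h₂ h
end
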